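/- arXiv:2505.01704 — 2 statements merged into one kernel-verified Lean document; each statement's English description precedes it below -/
import Mathlib

section
/- Let E be a finite nonempty index set, let β : E → (0,∞), and let w : E → [0,∞) with w_j > 0 for at least one j ∈ E. Then there exists a constant C > 0 (depending only on E, β and w) such that for every family x : E → (0,∞), ∑_{j ∈ E} w_j · K̂₁(√(2β_j) x_j) / ( x_j · ∑_{k ∈ E} w_k K₀(√(2β_k) x_k) ) ≤ C · ( ∑_{j ∈ E} 𝟙{√(2β_j) x_j ≤ 1/2} / ( x_j K₀(√(2β_j) x_j) ) + 1 ). -/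
open MeasureTheory Filter Set Topology

/-- Macdonald function `K₀`, via its integral representation. -/
noncomputable def K0 (x : ℝ) : ℝ := ∫ t in Set.Ioi (0 : ℝ), Real.exp (-x * Real.cosh t)

/-- Macdonald function `K₁`, via its integral representation. -/
noncomputable def K1 (x : ℝ) : ℝ :=
  ∫ t in Set.Ioi (0 : ℝ), Real.exp (-x * Real.cosh t) * Real.cosh t

/-- `K̂₁(x) = x K₁(x)`. -/
noncomputable def hatK1 (x : ℝ) : ℝ := x * K1 x

/-!
Write `y = √(2βⱼ) xⱼ`. Since `cosh t ≤ 1 + sinh t` on `[0, ∞)` and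
`∫₀^∞ e^{-y cosh t} sinh t dt = e^{-y}/y`, one has `K̂₁(y) ≤ y K₀(y) + e^{-y}`. Restricting the
integral for `K₀(y)` to `(0, 1/(2y))`, where `cosh t ≤ 1 + t²`, gives `e^{-y} ≤ 4 y K₀(y)` for
`y ≥ 1/2`. Keeping only the `j`-th term of the denominator, the `j`-th summand is therefore at most
`5 √(2βⱼ)`, plus `1/(xⱼ K₀(y))` when `y ≤ 1/2`; summing over `j` gives the bound with
`C = 5 ∑ⱼ √(2βⱼ) + 1`.
-/

open Real

lemma exp_le_two_mul_cosh (t : ℝ) : exp t ≤ 2 * cosh t := by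
  rw [cosh_eq]
  linarith [exp_pos (-t)]

lemma cosh_le_exp_of_nonneg {t : ℝ} (ht : 0 ≤ t) : cosh t ≤ exp t := by
  rw [← cosh_add_sinh]
  linarith [sinh_nonneg_iff.2 ht]

lemma cosh_le_one_add_sq {t : ℝ} (ht : |t| ≤ 1) : cosh t ≤ 1 + t ^ 2 := by
  have hpos := (abs_le.1 (abs_exp_sub_one_sub_id_le ht)).2
  have hneg := (abs_le.1 (abs_exp_sub_one_sub_id_le (x := -t) (by rwa [abs_neg]))).2
  rw [neg_sq] at hneg
  rw [cosh_eq]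
  linarith

lemma tendsto_cosh_atTop : Tendsto cosh atTop atTop :=
  tendsto_atTop_mono (fun t => by linarith [exp_le_two_mul_cosh t])
    (tendsto_exp_atTop.atTop_div_const two_pos)

lemma integrableOn_exp_mul_exp_neg_mul_exp {c : ℝ} (hc : 0 < c) :
    IntegrableOn (fun t => exp t * exp (-c * exp t)) (Ioi 0) := by
  have hderiv : ∀ t ∈ Ici (0 : ℝ),
      HasDerivAt (fun t => -c⁻¹ * exp (-c * exp t)) (exp t * exp (-c * exp t)) t := by
    intro t _
    refine (((hasDerivAt_exp t).const_mul (-c)).exp.const_mul (-c⁻¹)).congr_deriv ?_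
    field_simp
  have hlim : Tendsto (fun t => -c⁻¹ * exp (-c * exp t)) atTop (𝓝 0) := by
    simpa using (tendsto_exp_atBot.comp
      (tendsto_exp_atTop.const_mul_atTop_of_neg (neg_neg_of_pos hc))).const_mul (-c⁻¹)
  exact integrableOn_Ioi_deriv_of_nonneg' hderiv (fun t _ => by positivity) hlim

lemma integrableOn_exp_neg_mul_cosh_mul {y : ℝ} (hy : 0 < y) {g : ℝ → ℝ} (hg : Continuous g)
    (hg_le : ∀ t, 0 ≤ t → |g t| ≤ exp t) :
    IntegrableOn (fun t => exp (-y * cosh t) * g t) (Ioi 0) := by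
  refine (integrableOn_exp_mul_exp_neg_mul_exp (half_pos hy)).mono'
    (by fun_prop : Continuous _).aestronglyMeasurable
    ((ae_restrict_iff' measurableSet_Ioi).2 (ae_of_all _ fun t ht => ?_))
  have hexp : exp (-y * cosh t) ≤ exp (-(y / 2) * exp t) :=
    exp_le_exp.2 (by nlinarith [exp_le_two_mul_cosh t])
  rw [norm_mul, norm_of_nonneg (exp_pos _).le, norm_eq_abs, mul_comm (exp t)]
  exact mul_le_mul hexp (hg_le t (le_of_lt ht)) (abs_nonneg _) (exp_pos _).le

lemma integrableOn_exp_neg_mul_cosh {y : ℝ} (hy : 0 < y) :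
    IntegrableOn (fun t => exp (-y * cosh t)) (Ioi 0) := by
  simpa using integrableOn_exp_neg_mul_cosh_mul hy continuous_const (g := fun _ => 1)
    fun t ht => by simpa using one_le_exp ht

lemma integrableOn_exp_neg_mul_cosh_mul_cosh {y : ℝ} (hy : 0 < y) :
    IntegrableOn (fun t => exp (-y * cosh t) * cosh t) (Ioi 0) :=
  integrableOn_exp_neg_mul_cosh_mul hy continuous_cosh
    fun t ht => (abs_of_pos (cosh_pos t)).symm ▸ cosh_le_exp_of_nonneg ht

lemma integrableOn_exp_neg_mul_cosh_mul_sinh {y : ℝ} (hy : 0 < y) :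
    IntegrableOn (fun t => exp (-y * cosh t) * sinh t) (Ioi 0) :=
  integrableOn_exp_neg_mul_cosh_mul hy continuous_sinh fun t ht =>
    (abs_of_nonneg (sinh_nonneg_iff.2 ht)).symm ▸ (sinh_lt_cosh (x := t)).le.trans (cosh_le_exp_of_nonneg ht)

lemma integral_exp_neg_mul_cosh_mul_sinh {y : ℝ} (hy : 0 < y) :
    ∫ t in Ioi 0, exp (-y * cosh t) * sinh t = exp (-y) / y := by
  have hderiv : ∀ t ∈ Ici (0 : ℝ),
      HasDerivAt (fun t => -y⁻¹ * exp (-y * cosh t)) (exp (-y * cosh t) * sinh t) t := by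
    intro t _
    refine (((hasDerivAt_cosh t).const_mul (-y)).exp.const_mul (-y⁻¹)).congr_deriv ?_
    field_simp
  have hlim : Tendsto (fun t => -y⁻¹ * exp (-y * cosh t)) atTop (𝓝 0) := by
    simpa using (tendsto_exp_atBot.comp
      (tendsto_cosh_atTop.const_mul_atTop_of_neg (neg_neg_of_pos hy))).const_mul (-y⁻¹)
  rw [integral_Ioi_of_hasDerivAt_of_tendsto' hderiv (integrableOn_exp_neg_mul_cosh_mul_sinh hy)
    hlim, cosh_zero]
  field_simp
  ring

lemma K1_nonneg (y : ℝ) : 0 ≤ K1 y :=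
  setIntegral_nonneg measurableSet_Ioi fun t _ => mul_nonneg (exp_pos _).le (cosh_pos t).le

lemma hatK1_nonneg {y : ℝ} (hy : 0 ≤ y) : 0 ≤ hatK1 y :=
  mul_nonneg hy (K1_nonneg y)

lemma hatK1_le_mul_K0_add_exp_neg {y : ℝ} (hy : 0 < y) : hatK1 y ≤ y * K0 y + exp (-y) := by
  have hK1 : K1 y ≤ K0 y + exp (-y) / y := by
    rw [K1, K0, ← integral_exp_neg_mul_cosh_mul_sinh hy, ← integral_add
      (integrableOn_exp_neg_mul_cosh hy) (integrableOn_exp_neg_mul_cosh_mul_sinh hy)]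
    refine setIntegral_mono_on (integrableOn_exp_neg_mul_cosh_mul_cosh hy)
      ((integrableOn_exp_neg_mul_cosh hy).add (integrableOn_exp_neg_mul_cosh_mul_sinh hy))
      measurableSet_Ioi fun t ht => ?_
    have hcosh : cosh t ≤ 1 + sinh t := by
      linarith [cosh_sub_sinh t, exp_le_one_iff.2 (neg_nonpos.2 (le_of_lt ht))]
    nlinarith [exp_pos (-y * cosh t)]
  calc hatK1 y ≤ y * (K0 y + exp (-y) / y) := mul_le_mul_of_nonneg_left hK1 hy.le
    _ = y * K0 y + exp (-y) := by field_simp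

lemma mul_exp_neg_le_K0 {y δ : ℝ} (hy : 0 < y) (hδ : 0 < δ) (hδ1 : δ ≤ 1) :
    δ * exp (-(y * (1 + δ ^ 2))) ≤ K0 y := by
  have hint := integrableOn_exp_neg_mul_cosh hy
  calc δ * exp (-(y * (1 + δ ^ 2)))
      = exp (-(y * (1 + δ ^ 2))) * volume.real (Ioo 0 δ) := by simp [hδ.le, mul_comm]
    _ ≤ ∫ t in Ioo 0 δ, exp (-y * cosh t) := by
      refine setIntegral_ge_of_const_le_real measurableSet_Ioo (by simp) (fun t ht => ?_)
        (hint.mono_set Ioo_subset_Ioi_self)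
      have hcosh : cosh t ≤ 1 + δ ^ 2 :=
        (cosh_le_one_add_sq (abs_le.2 ⟨by linarith [ht.1], by linarith [ht.2]⟩)).trans
          (by gcongr; exacts [ht.1.le, ht.2.le])
      exact exp_le_exp.2 (by nlinarith)
    _ ≤ K0 y := setIntegral_mono_set hint (ae_of_all _ fun _ => (exp_pos _).le)
      Ioo_subset_Ioi_self.eventuallyLE

lemma K0_pos {y : ℝ} (hy : 0 < y) : 0 < K0 y :=
  lt_of_lt_of_le (by positivity) (mul_exp_neg_le_K0 hy one_pos le_rfl)

lemma exp_neg_le_four_mul_K0 {y : ℝ} (hy : 1 / 2 ≤ y) : exp (-y) ≤ 4 * (y * K0 y) := by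
  have hy0 : 0 < y := by linarith
  have hδ1 : (2 * y)⁻¹ ≤ 1 := inv_le_one_of_one_le₀ (by linarith)
  have hexp_half : exp (1 / 2) ≤ 2 := by
    have := exp_bound_div_one_sub_of_interval' (x := 1 / 2) (by norm_num) (by norm_num)
    norm_num at this ⊢
    linarith
  have hexponent : y * (1 + ((2 * y)⁻¹) ^ 2) ≤ y + 1 / 2 := by
    field_simp
    nlinarith
  calc exp (-y) = exp (1 / 2) * exp (-(y + 1 / 2)) := by rw [← exp_add]; ring_nf
    _ ≤ 2 * exp (-(y + 1 / 2)) := by gcongr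
    _ = 4 * (y * ((2 * y)⁻¹ * exp (-(y + 1 / 2)))) := by field_simp; ring
    _ ≤ 4 * (y * ((2 * y)⁻¹ * exp (-(y * (1 + ((2 * y)⁻¹) ^ 2))))) := by gcongr
    _ ≤ 4 * (y * K0 y) := by gcongr; exact mul_exp_neg_le_K0 hy0 (by positivity) hδ1

lemma hatK1_div_mul_K0_le {a x : ℝ} (ha : 0 < a) (hx : 0 < x) :
    hatK1 (a * x) / (x * K0 (a * x))
      ≤ 5 * a + if a * x ≤ 1 / 2 then 1 / (x * K0 (a * x)) else 0 := by
  have hy : 0 < a * x := mul_pos ha hx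
  have hd : 0 < x * K0 (a * x) := mul_pos hx (K0_pos hy)
  have hsplit : hatK1 (a * x) / (x * K0 (a * x)) ≤ a + exp (-(a * x)) / (x * K0 (a * x)) := by
    rw [div_le_iff₀ hd, add_mul, div_mul_cancel₀ _ hd.ne']
    linarith [hatK1_le_mul_K0_add_exp_neg hy]
  split_ifs with hsmall
  · have : exp (-(a * x)) / (x * K0 (a * x)) ≤ 1 / (x * K0 (a * x)) := by
      gcongr
      exact exp_le_one_iff.2 (by linarith)
    linarith
  · have : exp (-(a * x)) / (x * K0 (a * x)) ≤ 4 * a := by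
      rw [div_le_iff₀ hd]
      linarith [exp_neg_le_four_mul_K0 (le_of_lt (not_le.1 hsmall))]
    linarith

lemma mul_div_le_div_of_mul_le {w u b S : ℝ} (hw : 0 ≤ w) (hu : 0 ≤ u) (hb : 0 < b)
    (hS : w * b ≤ S) : w * u / S ≤ u / b := by
  rcases hw.eq_or_lt with rfl | hw
  · simpa using div_nonneg hu hb.le
  rw [div_le_div_iff₀ (lt_of_lt_of_le (mul_pos hw hb) hS) hb]
  nlinarith

lemma mul_hatK1_div_mul_sum_le {ι : Type*} [Fintype ι] {a w x : ι → ℝ} (ha : ∀ j, 0 < a j)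
    (hw : ∀ j, 0 ≤ w j) (hx : ∀ j, 0 < x j) (j : ι) :
    w j * hatK1 (a j * x j) / (x j * ∑ k, w k * K0 (a k * x k))
      ≤ 5 * a j + if a j * x j ≤ 1 / 2 then 1 / (x j * K0 (a j * x j)) else 0 := by
  have hK0 : ∀ k, 0 < K0 (a k * x k) := fun k => K0_pos (mul_pos (ha k) (hx k))
  have hsum : w j * K0 (a j * x j) ≤ ∑ k, w k * K0 (a k * x k) :=
    Finset.single_le_sum (f := fun k => w k * K0 (a k * x k))
      (fun k _ => mul_nonneg (hw k) (hK0 k).le) (Finset.mem_univ j)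
  refine (mul_div_le_div_of_mul_le (hw j) (hatK1_nonneg (mul_pos (ha j) (hx j)).le)
    (mul_pos (hx j) (hK0 j)) ?_).trans (hatK1_div_mul_K0_le (ha j) (hx j))
  rw [mul_left_comm]
  exact mul_le_mul_of_nonneg_left hsum (hx j).le

theorem hatK1_over_sumK0_bound_general {ι : Type*} [Fintype ι]
    (β w : ι → ℝ) (hβ : ∀ j, 0 < β j) (hw : ∀ j, 0 ≤ w j) :
    ∃ C : ℝ, 0 < C ∧ ∀ x : ι → ℝ, (∀ j, 0 < x j) →
      ∑ j, w j * hatK1 (Real.sqrt (2 * β j) * x j)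
          / (x j * ∑ k, w k * K0 (Real.sqrt (2 * β k) * x k))
        ≤ C * ((∑ j, if Real.sqrt (2 * β j) * x j ≤ 1 / 2
            then 1 / (x j * K0 (Real.sqrt (2 * β j) * x j)) else 0) + 1) := by
  have ha : ∀ j, 0 < √(2 * β j) := fun j => sqrt_pos.2 (by linarith [hβ j])
  refine ⟨5 * ∑ j, √(2 * β j) + 1, by positivity, fun x hx => ?_⟩
  set I := ∑ j, if √(2 * β j) * x j ≤ 1 / 2 then 1 / (x j * K0 (√(2 * β j) * x j)) else 0
  have hI : 0 ≤ I := Finset.sum_nonneg fun j _ => by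
    have := K0_pos (mul_pos (ha j) (hx j))
    have := hx j
    split_ifs <;> positivity
  have hA : 0 ≤ ∑ j, √(2 * β j) := Finset.sum_nonneg fun j _ => (ha j).le
  calc _ ≤ ∑ j, (5 * √(2 * β j) + _) :=
        Finset.sum_le_sum fun j _ => mul_hatK1_div_mul_sum_le ha hw hx j
    _ = 5 * ∑ j, √(2 * β j) + I := by rw [Finset.sum_add_distrib, Finset.mul_sum]
    _ ≤ _ := by nlinarith [mul_nonneg hA hI]

/-- The bound (3.23) from the proof of Lemma 3.11: for a finite nonempty index set,
`β : E → (0,∞)` and nonzero nonnegative weights `w`, there is `C > 0` such that for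
all positive families `x`,
`∑_j w_j K̂₁(√(2β_j) x_j) / (x_j ∑_k w_k K₀(√(2β_k) x_k))
  ≤ C (∑_j 𝟙{√(2β_j) x_j ≤ 1/2}/(x_j K₀(√(2β_j) x_j)) + 1)`. -/
theorem hatK1_over_sumK0_bound {ι : Type*} [Fintype ι] [Nonempty ι]
    (β w : ι → ℝ) (hβ : ∀ j, 0 < β j) (hw : ∀ j, 0 ≤ w j) (hw' : ∃ j, 0 < w j) :
    ∃ C : ℝ, 0 < C ∧ ∀ x : ι → ℝ, (∀ j, 0 < x j) →
      ∑ j, w j * hatK1 (Real.sqrt (2 * β j) * x j)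
          / (x j * ∑ k, w k * K0 (Real.sqrt (2 * β k) * x k))
        ≤ C * ((∑ j, if Real.sqrt (2 * β j) * x j ≤ 1 / 2
            then 1 / (x j * K0 (Real.sqrt (2 * β j) * x j)) else 0) + 1) :=
  hatK1_over_sumK0_bound_general β w hβ hw
end

section
/- The function x ↦ x K₁(x)/K₀(x) is nondecreasing on (0,∞); that is, for all 0 < x ≤ y one has x K₁(x)/K₀(x) ≤ y K₁(y)/K₀(y). -/
open MeasureTheory Filter Set Topology

/-!
Differentiating under the integral sign gives `K₀' = -K₁` and
`K₁' = -∫ e^{-x cosh t} cosh² t dt = -K₀ - ∫ e^{-x cosh t} sinh² t dt`, while integration by parts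
gives `K₁(x) = x ∫ e^{-x cosh t} sinh² t dt`; together `(x K₁)' = -x K₀`. Hence
`(x K₁ / K₀)' = x (K₁² - K₀²) / K₀²`, which is nonnegative since `cosh ≥ 1` forces `K₁ ≥ K₀ > 0`.
-/

open Real
open scoped Nat

lemma abs_sinh_le_cosh (t : ℝ) : |sinh t| ≤ cosh t :=
  abs_le_of_sq_le_sq (by rw [cosh_sq]; linarith) (cosh_pos t).le

lemma abs_sinh_sq_le_cosh_sq (t : ℝ) : |sinh t ^ 2| ≤ cosh t ^ 2 := by
  rw [abs_of_nonneg (sq_nonneg _), cosh_sq]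
  linarith

lemma self_le_cosh {t : ℝ} (ht : 0 ≤ t) : t ≤ cosh t :=
  (self_le_sinh_iff.2 ht).trans (sinh_lt_cosh t).le

lemma cosh_pow_mul_exp_neg_mul_cosh_le {c : ℝ} (hc : 0 < c) (n : ℕ) {t : ℝ} (ht : 0 ≤ t) :
    cosh t ^ n * exp (-c * cosh t) ≤ n ! * (2 / c) ^ n * exp (-(c / 2) * t) := by
  have hpow : cosh t ^ n ≤ n ! * (2 / c) ^ n * exp (c / 2 * cosh t) := by
    have h := pow_div_factorial_le_exp _ (mul_nonneg (half_pos hc).le (cosh_pos t).le) n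
    rw [div_le_iff₀ (by positivity), mul_pow] at h
    calc cosh t ^ n = (2 / c) ^ n * ((c / 2) ^ n * cosh t ^ n) := by
          rw [← mul_assoc, ← mul_pow, div_mul_div_cancel₀' two_ne_zero, div_self hc.ne', one_pow,
            one_mul]
      _ ≤ (2 / c) ^ n * (exp (c / 2 * cosh t) * n !) := by gcongr
      _ = _ := by ring
  calc cosh t ^ n * exp (-c * cosh t)
      ≤ n ! * (2 / c) ^ n * exp (c / 2 * cosh t) * exp (-c * cosh t) := by gcongr
    _ = n ! * (2 / c) ^ n * exp (-(c / 2) * cosh t) := by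
      rw [mul_assoc, ← exp_add]; ring_nf
    _ ≤ n ! * (2 / c) ^ n * exp (-(c / 2) * t) := by
      gcongr n ! * (2 / c) ^ n * ?_
      exact exp_le_exp.2 (by nlinarith [self_le_cosh ht])

lemma integrableOn_exp_neg_mul_cosh_mul_s16 {c : ℝ} (hc : 0 < c) {f : ℝ → ℝ} (hf : Continuous f)
    {n : ℕ} (hfn : ∀ t, |f t| ≤ cosh t ^ n) :
    IntegrableOn (fun t => exp (-c * cosh t) * f t) (Ioi 0) := by
  refine Integrable.mono'
    ((exp_neg_integrableOn_Ioi 0 (half_pos hc)).const_mul (n ! * (2 / c) ^ n))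
    (by fun_prop : Continuous fun t => exp (-c * cosh t) * f t).aestronglyMeasurable ?_
  filter_upwards [ae_restrict_mem measurableSet_Ioi] with t ht
  calc ‖exp (-c * cosh t) * f t‖ = |f t| * exp (-c * cosh t) := by
        rw [Real.norm_eq_abs, abs_mul, abs_of_pos (exp_pos _), mul_comm]
    _ ≤ cosh t ^ n * exp (-c * cosh t) := by gcongr; exact hfn t
    _ ≤ _ := cosh_pow_mul_exp_neg_mul_cosh_le hc n (le_of_lt ht)

lemma hasDerivAt_integral_exp_neg_mul_cosh_mul {f : ℝ → ℝ} (hf : Continuous f) {n : ℕ}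
    (hfn : ∀ t, |f t| ≤ cosh t ^ n) {x : ℝ} (hx : 0 < x) :
    HasDerivAt (fun y => ∫ t in Ioi 0, exp (-y * cosh t) * f t)
      (-∫ t in Ioi 0, exp (-x * cosh t) * (cosh t * f t)) x := by
  have hcosh_mul : ∀ t, |cosh t * f t| ≤ cosh t ^ (n + 1) := fun t => by
    rw [abs_mul, abs_of_pos (cosh_pos t), pow_succ']
    gcongr
    exact hfn t
  have hderiv := hasDerivAt_integral_of_dominated_loc_of_deriv_le (μ := volume.restrict (Ioi 0))
    (F := fun y t => exp (-y * cosh t) * f t)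
    (F' := fun y t => -(exp (-y * cosh t) * (cosh t * f t)))
    (Metric.ball_mem_nhds x (half_pos hx))
    (Eventually.of_forall fun y => (by fun_prop : Continuous _).aestronglyMeasurable)
    (integrableOn_exp_neg_mul_cosh_mul_s16 hx hf hfn)
    (by fun_prop : Continuous fun t => -(exp (-x * cosh t) * (cosh t * f t))).aestronglyMeasurable
    (h_bound := ae_of_all _ fun t y hy => ?_)
    (integrableOn_exp_neg_mul_cosh_mul_s16 (half_pos hx)
      (by fun_prop : Continuous fun t => cosh t ^ (n + 1)) fun t => (abs_of_pos (by positivity)).le)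
    (ae_of_all _ fun t y _ => ?_)
  · simpa only [integral_neg] using hderiv.2
  · rw [Metric.mem_ball, Real.dist_eq, abs_sub_lt_iff] at hy
    rw [norm_neg, Real.norm_eq_abs, abs_mul, abs_of_pos (exp_pos _)]
    gcongr
    · nlinarith [cosh_pos t]
    · exact hcosh_mul t
  · exact ((hasDerivAt_neg y).mul_const (cosh t)).exp.mul_const (f t) |>.congr_deriv (by ring)

lemma integrableOn_K0_integrand {x : ℝ} (hx : 0 < x) :
    IntegrableOn (fun t => exp (-x * cosh t)) (Ioi 0) := by
  simpa using integrableOn_exp_neg_mul_cosh_mul_s16 hx continuous_const (n := 0) (f := fun _ => 1)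
    fun t => by simp

lemma integrableOn_K1_integrand {x : ℝ} (hx : 0 < x) :
    IntegrableOn (fun t => exp (-x * cosh t) * cosh t) (Ioi 0) :=
  integrableOn_exp_neg_mul_cosh_mul_s16 hx continuous_cosh (n := 1)
    fun t => by rw [pow_one, abs_of_pos (cosh_pos t)]

lemma integrableOn_exp_neg_mul_cosh_mul_sinh_sq {x : ℝ} (hx : 0 < x) :
    IntegrableOn (fun t => exp (-x * cosh t) * sinh t ^ 2) (Ioi 0) :=
  integrableOn_exp_neg_mul_cosh_mul_s16 hx (by fun_prop) abs_sinh_sq_le_cosh_sq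

lemma K1_eq_mul_integral_sinh_sq {x : ℝ} (hx : 0 < x) :
    K1 x = x * ∫ t in Ioi 0, exp (-x * cosh t) * sinh t ^ 2 := by
  set g : ℝ → ℝ := fun t => exp (-x * cosh t) * sinh t
  have hg : ∀ t ∈ Ici (0 : ℝ), HasDerivAt g
      (exp (-x * cosh t) * cosh t - x * (exp (-x * cosh t) * sinh t ^ 2)) t := fun t _ =>
    (((hasDerivAt_cosh t).const_mul (-x)).exp.mul (hasDerivAt_sinh t)).congr_deriv (by ring)
  have hg_tendsto : Tendsto g atTop (𝓝 0) := by
    have hdecay := (tendsto_exp_atBot.comp (tendsto_id.const_mul_atTop_of_neg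
      (neg_lt_zero.2 (half_pos hx)))).const_mul ((1 : ℕ) ! * (2 / x) ^ 1)
    rw [mul_zero] at hdecay
    refine squeeze_zero_norm' ?_ hdecay
    filter_upwards [eventually_ge_atTop 0] with t ht
    calc ‖g t‖ = |sinh t| * exp (-x * cosh t) := by
          rw [Real.norm_eq_abs, abs_mul, abs_of_pos (exp_pos _), mul_comm]
      _ ≤ cosh t ^ 1 * exp (-x * cosh t) := by rw [pow_one]; gcongr; exact abs_sinh_le_cosh t
      _ ≤ _ := cosh_pow_mul_exp_neg_mul_cosh_le hx 1 ht
  have hparts := integral_Ioi_of_hasDerivAt_of_tendsto' hg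
    ((integrableOn_K1_integrand hx).sub
      ((integrableOn_exp_neg_mul_cosh_mul_sinh_sq hx).const_mul x)) hg_tendsto
  rw [integral_sub (integrableOn_K1_integrand hx)
    ((integrableOn_exp_neg_mul_cosh_mul_sinh_sq hx).const_mul x), integral_const_mul] at hparts
  simp only [g, sinh_zero, mul_zero, sub_zero] at hparts
  rw [K1]
  linarith

lemma hasDerivAt_K0 {x : ℝ} (hx : 0 < x) : HasDerivAt K0 (-K1 x) x := by
  have hderiv := hasDerivAt_integral_exp_neg_mul_cosh_mul continuous_const (n := 0)
    (f := fun _ => 1) (fun t => by simp) hx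
  simp only [mul_one] at hderiv
  exact hderiv

lemma hasDerivAt_K1 {x : ℝ} (hx : 0 < x) :
    HasDerivAt K1 (-(K0 x + ∫ t in Ioi 0, exp (-x * cosh t) * sinh t ^ 2)) x := by
  have hderiv := hasDerivAt_integral_exp_neg_mul_cosh_mul continuous_cosh (n := 1)
    (fun t => by rw [pow_one, abs_of_pos (cosh_pos t)]) hx
  have hcosh_mul_cosh : ∀ t, exp (-x * cosh t) * (cosh t * cosh t) =
      exp (-x * cosh t) + exp (-x * cosh t) * sinh t ^ 2 := fun t => by
    linear_combination exp (-x * cosh t) * cosh_sq t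
  simp only [hcosh_mul_cosh] at hderiv
  rwa [integral_add (integrableOn_K0_integrand hx)
    (integrableOn_exp_neg_mul_cosh_mul_sinh_sq hx)] at hderiv

lemma hasDerivAt_mul_K1 {x : ℝ} (hx : 0 < x) :
    HasDerivAt (fun y => y * K1 y) (-(x * K0 x)) x := by
  refine ((hasDerivAt_id x).mul (hasDerivAt_K1 hx)).congr_deriv ?_
  rw [id, K1_eq_mul_integral_sinh_sq hx]
  ring

lemma K0_pos_s16 {x : ℝ} (hx : 0 < x) : 0 < K0 x := by
  rw [K0, setIntegral_pos_iff_support_of_nonneg_ae (ae_of_all _ fun t => (exp_pos _).le)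
    (integrableOn_K0_integrand hx)]
  simp [Function.support, (exp_pos _).ne']

lemma K0_le_K1 {x : ℝ} (hx : 0 < x) : K0 x ≤ K1 x :=
  setIntegral_mono_on (integrableOn_K0_integrand hx) (integrableOn_K1_integrand hx)
    measurableSet_Ioi fun t _ => le_mul_of_one_le_right (exp_pos _).le (one_le_cosh t)

lemma monotoneOn_mul_K1_div_K0 : MonotoneOn (fun x => x * K1 x / K0 x) (Ioi 0) := by
  have hderiv : ∀ x ∈ Ioi (0 : ℝ), HasDerivAt (fun x => x * K1 x / K0 x)
      (x * (K1 x ^ 2 - K0 x ^ 2) / K0 x ^ 2) x := fun x hx =>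
    ((hasDerivAt_mul_K1 hx).div (hasDerivAt_K0 hx) (K0_pos_s16 hx).ne').congr_deriv (by ring)
  refine monotoneOn_of_hasDerivWithinAt_nonneg (convex_Ioi 0)
    (f' := fun x => x * (K1 x ^ 2 - K0 x ^ 2) / K0 x ^ 2)
    (fun x hx => (hderiv x hx).continuousAt.continuousWithinAt) ?_ ?_ <;>
    rw [interior_Ioi]
  · exact fun x hx => (hderiv x hx).hasDerivWithinAt
  · intro x hx
    have hsq : K0 x ^ 2 ≤ K1 x ^ 2 := pow_le_pow_left₀ (K0_pos_s16 hx).le (K0_le_K1 hx) 2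
    exact div_nonneg (mul_nonneg (le_of_lt hx) (sub_nonneg.2 hsq)) (sq_nonneg _)

/-- First assertion of Lemma 5.8: the ratio `x ↦ x K₁(x)/K₀(x)` is nondecreasing
on `(0,∞)`. -/
theorem xK1_div_K0_monotone :
    ∀ x y : ℝ, 0 < x → x ≤ y → x * K1 x / K0 x ≤ y * K1 y / K0 y :=
  fun _ _ hx hxy => monotoneOn_mul_K1_div_K0 hx (hx.trans_le hxy) hxy
end
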